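/- arXiv:2302.09660 — 2 statements merged into one kernel-verified Lean document; each statement's English description precedes it below -/
import Mathlib

section
/- Let h be a 5-dimensional Lie subalgebra of T*sl(2,ℝ) that is degenerate with respect to the canonical bilinear form ⟨u+α, v+β⟩ = α(v) + β(u). Then there exists a Lie algebra automorphism F of sl(2,ℝ) such that T*F(h) = span(e_1,e_3) ⊕ sl(2,ℝ)*, where T*F is the automorphism of T*sl(2,ℝ) given by T*F(u+α) = F(u) + α∘F^{−1}. -/
/-!
A Lie subalgebra `𝔥` of `T*𝔤 = 𝔤 ⊕ 𝔤*` is described by the subalgebra `𝔨 = pr_𝔤 𝔥` of `𝔤` and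
the `𝔨`-invariant subspace `𝔫 = 𝔥 ∩ 𝔤*`, with `dim 𝔨 + dim 𝔫 = dim 𝔥`. For `𝔤 = sl(2,ℝ)` and
`dim 𝔥 = 5`, if `𝔫 ≠ 𝔤*` then `𝔨 = 𝔤` and `𝔫` is a coadjoint-invariant plane, whose annihilator
would be a one-dimensional ideal of the perfect, centreless algebra `sl(2,ℝ)`. So `𝔥 = 𝔨 ⊕ 𝔤*`
with `𝔨 = ker φ` a two-dimensional subalgebra. Closure of `ker φ` under the bracket forces `φ` to
vanish on the `h` and `e` of some `sl₂`-triple, and the automorphism of `sl(2,ℝ)` sending the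
standard triple `(e₃, e₁, e₂)` to it carries `span(e₁, e₃)` onto `𝔨`.
-/

section TStarExtension

variable {L : Type*} [LieRing L] [LieAlgebra ℝ L]

/-- The Lie ring structure of the `T*`-extension `T*g = g ⊕ g*` of a real Lie algebra `g`:
`[u + α, v + β] = [u,v] + ad*_u β − ad*_v α`, where `(ad*_u α)(v) = −α([u,v])`.
(Here `⁅u, β⁆ = ad*_u β` is the coadjoint action of Mathlib's
`Module.Dual.instLieRingModule`, for which `⁅u, β⁆ v = −β ⁅u, v⁆`.) -/
instance tstarLieRing : LieRing (L × Module.Dual ℝ L) where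
  bracket x y := (⁅x.1, y.1⁆, ⁅x.1, y.2⁆ - ⁅y.1, x.2⁆)
  add_lie x y z := by
    refine Prod.ext ?_ ?_
    · show ⁅(x + y).1, z.1⁆ = (⁅x.1, z.1⁆ + ⁅y.1, z.1⁆ : L)
      simp [add_lie]
    · show ⁅(x + y).1, z.2⁆ - ⁅z.1, (x + y).2⁆ =
        (⁅x.1, z.2⁆ - ⁅z.1, x.2⁆) + (⁅y.1, z.2⁆ - ⁅z.1, y.2⁆)
      simp only [Prod.fst_add, Prod.snd_add, add_lie, lie_add]
      abel
  lie_add x y z := by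
    refine Prod.ext ?_ ?_
    · show ⁅x.1, (y + z).1⁆ = (⁅x.1, y.1⁆ + ⁅x.1, z.1⁆ : L)
      simp [lie_add]
    · show ⁅x.1, (y + z).2⁆ - ⁅(y + z).1, x.2⁆ =
        (⁅x.1, y.2⁆ - ⁅y.1, x.2⁆) + (⁅x.1, z.2⁆ - ⁅z.1, x.2⁆)
      simp only [Prod.fst_add, Prod.snd_add, add_lie, lie_add]
      abel
  lie_self x := by
    refine Prod.ext ?_ ?_
    · show ⁅x.1, x.1⁆ = (0 : L)
      simp
    · show ⁅x.1, x.2⁆ - ⁅x.1, x.2⁆ = (0 : Module.Dual ℝ L)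
      simp
  leibniz_lie x y z := by
    refine Prod.ext ?_ ?_
    · show ⁅x.1, ⁅y.1, z.1⁆⁆ = (⁅⁅x.1, y.1⁆, z.1⁆ + ⁅y.1, ⁅x.1, z.1⁆⁆ : L)
      exact leibniz_lie _ _ _
    · show ⁅x.1, ⁅y.1, z.2⁆ - ⁅z.1, y.2⁆⁆ - ⁅⁅y.1, z.1⁆, x.2⁆ =
        (⁅⁅x.1, y.1⁆, z.2⁆ - ⁅z.1, ⁅x.1, y.2⁆ - ⁅y.1, x.2⁆⁆) +
        (⁅y.1, ⁅x.1, z.2⁆ - ⁅z.1, x.2⁆⁆ - ⁅⁅x.1, z.1⁆, y.2⁆)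
      simp only [lie_lie, lie_sub]
      abel

/-- The `T*`-extension is a Lie algebra over `ℝ`. -/
noncomputable instance tstarLieAlgebra : LieAlgebra ℝ (L × Module.Dual ℝ L) where
  lie_smul t x y := by
    refine Prod.ext ?_ ?_
    · show ⁅x.1, (t • y).1⁆ = t • ⁅x.1, y.1⁆
      rw [Prod.smul_fst, lie_smul]
    · show ⁅x.1, (t • y).2⁆ - ⁅(t • y).1, x.2⁆ = t • (⁅x.1, y.2⁆ - ⁅y.1, x.2⁆)
      ext m
      simp only [Prod.smul_fst, Prod.smul_snd, LinearMap.sub_apply, LinearMap.smul_apply,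
        Module.Dual.lie_apply, smul_lie, map_smul, smul_eq_mul, smul_sub]
      ring

/-- The canonical invariant bilinear form of the `T*`-extension:
`⟨u + α, v + β⟩ = α(v) + β(u)`. -/
def tstarForm (x y : L × Module.Dual ℝ L) : ℝ := x.2 y.1 + y.2 x.1

end TStarExtension

/-- For a Lie algebra automorphism `F` of `g`, the induced automorphism
`T*F = (F, (F⁻¹)*)` of the `T*`-extension: `T*F(u + α) = (F u, α ∘ F⁻¹)`. -/
def tstarAut {L : Type*} [LieRing L] [LieAlgebra ℝ L] (F : L ≃ₗ⁅ℝ⁆ L) :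
    (L × Module.Dual ℝ L) →ₗ[ℝ] (L × Module.Dual ℝ L) :=
  LinearMap.prodMap F.toLinearEquiv.toLinearMap
    F.symm.toLinearEquiv.toLinearMap.dualMap

open Module

theorem LinearMap.map_lie_of_basis {ι R L L' : Type*} [CommRing R] [LieRing L] [LieAlgebra R L]
    [LieRing L'] [LieAlgebra R L'] (b : Basis ι R L) (g : L →ₗ[R] L')
    (hg : ∀ i j, g ⁅b i, b j⁆ = ⁅g (b i), g (b j)⁆) (x y : L) : g ⁅x, y⁆ = ⁅g x, g y⁆ :=
  LinearMap.congr_fun₂ (LinearMap.ext_basis b b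
    (B := (LieModule.toEnd R L L : L →ₗ[R] Module.End R L).compr₂ g)
    (B' := (LieModule.toEnd R L' L' : L' →ₗ[R] Module.End R L').compl₁₂ g g) hg) x y

theorem lie_lie_eq_zero_of_forall_lie_mem_span_singleton {R L : Type*} [CommRing R] [LieRing L]
    [LieAlgebra R L] {v : L} (hv : ∀ u : L, ⁅u, v⁆ ∈ R ∙ v) (x y : L) : ⁅⁅x, y⁆, v⁆ = 0 := by
  obtain ⟨a, ha⟩ := Submodule.mem_span_singleton.mp (hv x)
  obtain ⟨c, hc⟩ := Submodule.mem_span_singleton.mp (hv y)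
  rw [lie_lie, ← ha, ← hc, lie_smul, lie_smul, ← ha, ← hc, smul_smul, smul_smul, mul_comm,
    sub_self]

theorem Submodule.lie_mem_dualCoannihilator {R L : Type*} [CommRing R] [LieRing L]
    [LieAlgebra R L] {N : Submodule R (Dual R L)} (hN : ∀ (u : L), ∀ α ∈ N, ⁅u, α⁆ ∈ N) (u : L)
    {v : L} (hv : v ∈ N.dualCoannihilator) : ⁅u, v⁆ ∈ N.dualCoannihilator := by
  rw [Submodule.mem_dualCoannihilator] at hv ⊢
  intro α hα
  simpa using hv _ (hN u α hα)

theorem Submodule.finrank_map_fst_add_finrank_comap_inr {K M N : Type*} [Field K]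
    [AddCommGroup M] [Module K M] [AddCommGroup N] [Module K N] [FiniteDimensional K M]
    [FiniteDimensional K N] (S : Submodule K (M × N)) :
    finrank K (S.map (LinearMap.fst K M N)) + finrank K (S.comap (LinearMap.inr K M N)) =
      finrank K S := by
  rw [← ((LinearMap.fst K M N).domRestrict S).finrank_range_add_finrank_ker,
    LinearMap.range_domRestrict, LinearMap.ker_domRestrict, ← Submodule.finrank_map_subtype_eq,
    Submodule.map_comap_subtype, LinearMap.ker_fst, inf_comm, ← Submodule.map_comap_eq,
    ← (Submodule.equivMapOfInjective _ (LinearMap.inr_injective (R := K) (M := M) (M₂ := N))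
      (S.comap (LinearMap.inr K M N))).finrank_eq]

theorem Submodule.eq_prod_top_of_comap_inr_eq_top {R M N : Type*} [Ring R] [AddCommGroup M]
    [Module R M] [AddCommGroup N] [Module R N] (S : Submodule R (M × N))
    (h : S.comap (LinearMap.inr R M N) = ⊤) : S = (S.map (LinearMap.fst R M N)).prod ⊤ := by
  rw [← Submodule.comap_fst, Submodule.comap_map_eq_self]
  rw [LinearMap.ker_fst, LinearMap.range_eq_map, Submodule.map_le_iff_le_comap, h]

namespace IsSl2Triple

section LieRing

variable {L : Type*} [LieRing L] {h e f : L}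

lemma lie_f_e (t : IsSl2Triple h e f) : ⁅f, e⁆ = -h := by rw [← lie_skew, t.lie_e_f]

lemma lie_e_h (t : IsSl2Triple h e f) : ⁅e, h⁆ = -(2 • e) := by
  rw [← lie_skew, t.lie_h_e_nsmul]

lemma lie_f_h (t : IsSl2Triple h e f) : ⁅f, h⁆ = 2 • f := by
  rw [← lie_skew, t.lie_h_f_nsmul, neg_neg]

end LieRing

variable {K L : Type*} [Field K] [CharZero K] [LieRing L] [LieAlgebra K L] {h e f : L}

theorem linearIndependent (t : IsSl2Triple h e f) : LinearIndependent K ![e, f, h] := by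
  refine Module.End.eigenvectors_linearIndependent' (LieAlgebra.ad K L h) ![2, -2, 0]
    (fun i j => by fin_cases i <;> fin_cases j <;> norm_num) _ fun i => ?_
  fin_cases i
  · exact ⟨by simp [t.lie_h_e_smul K], t.e_ne_zero⟩
  · exact ⟨by simp [t.lie_lie_smul_f K], t.f_ne_zero⟩
  · exact ⟨by simp, t.h_ne_zero⟩

/-- The image of `(h, e, f)` under `exp (-s • ad f)`. -/
theorem shear (t : IsSl2Triple h e f) (s : K) :
    IsSl2Triple (h - (2 * s) • f) (e + s • h - s ^ 2 • f) f where
  h_ne_zero hzero := by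
    have := congrArg (⁅·, f⁆) hzero
    simp [sub_lie, t.lie_lie_smul_f K] at this
    exact t.f_ne_zero this
  lie_e_f := by
    simp only [add_lie, sub_lie, smul_lie, lie_self, t.lie_e_f, t.lie_h_f_nsmul]
    module
  lie_h_e_nsmul := by
    simp only [lie_add, lie_sub, sub_lie, lie_smul, smul_lie, lie_self, t.lie_h_e_nsmul,
      t.lie_h_f_nsmul, t.lie_f_e, t.lie_f_h]
    module
  lie_h_f_nsmul := by
    simp only [sub_lie, smul_lie, lie_self, t.lie_h_f_nsmul]
    module

end IsSl2Triple

namespace Module.Basis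

variable {K L : Type*} [Field K] [CharZero K] [LieRing L] [LieAlgebra K L]
  (b : Basis (Fin 3) K L)

theorem exists_lieEquiv_of_isSl2Triple (tb : IsSl2Triple (b 2) (b 0) (b 1)) {h e f : L}
    (t : IsSl2Triple h e f) : ∃ F : L ≃ₗ⁅K⁆ L, F (b 0) = e ∧ F (b 1) = f ∧ F (b 2) = h := by
  let b' := basisOfLinearIndependentOfCardEqFinrank t.linearIndependent
    (by rw [finrank_eq_card_basis b])
  let g := b.equiv b' (Equiv.refl _)
  have hg : ∀ i, g (b i) = ![e, f, h] i := fun i => by simp [g, b', Basis.equiv_apply]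
  have hg0 : g (b 0) = e := hg 0
  have hg1 : g (b 1) = f := hg 1
  have hg2 : g (b 2) = h := hg 2
  have hlie : ∀ i j, g ⁅b i, b j⁆ = ⁅g (b i), g (b j)⁆ := fun i j => by
    fin_cases i <;> fin_cases j <;>
      simp [hg0, hg1, hg2, tb.lie_e_f, tb.lie_f_e, tb.lie_h_e_nsmul, tb.lie_h_f_nsmul, tb.lie_e_h,
        tb.lie_f_h, t.lie_e_f, t.lie_f_e, t.lie_h_e_nsmul, t.lie_h_f_nsmul, t.lie_e_h, t.lie_f_h]
  let G : L →ₗ⁅K⁆ L := { (g : L →ₗ[K] L) with map_lie' := g.toLinearMap.map_lie_of_basis b hlie _ _ }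
  exact ⟨LieEquiv.ofBijective G g.bijective, hg0, hg1, hg2⟩

theorem eq_zero_of_forall_lie_mem_span_singleton (tb : IsSl2Triple (b 2) (b 0) (b 1)) {v : L}
    (hv : ∀ u : L, ⁅u, v⁆ ∈ K ∙ v) : v = 0 := by
  have hh : ⁅b 2, v⁆ = 0 := by
    rw [← tb.lie_e_f]
    exact lie_lie_eq_zero_of_forall_lie_mem_span_singleton hv _ _
  have he : ⁅b 0, v⁆ = 0 := by
    simpa [tb.lie_h_e_smul K] using lie_lie_eq_zero_of_forall_lie_mem_span_singleton hv (b 2) (b 0)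
  rw [← b.sum_repr v, Fin.sum_univ_three] at hh he ⊢
  simp only [lie_add, lie_smul, lie_self, tb.lie_h_e_nsmul, tb.lie_h_f_nsmul, tb.lie_e_f,
    tb.lie_e_h, smul_neg, smul_zero, add_zero, zero_add] at hh he
  have h0 : b.repr v 0 = 0 := by simpa using congrArg (fun w => b.repr w 0) hh
  have h1 : b.repr v 1 = 0 := by simpa using congrArg (fun w => b.repr w 1) hh
  have h2 : b.repr v 2 = 0 := by simpa using congrArg (fun w => b.repr w 0) he
  simp [h0, h1, h2]

theorem finrank_ne_two_of_forall_lie_mem (tb : IsSl2Triple (b 2) (b 0) (b 1))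
    {N : Submodule K (Dual K L)} (hN : ∀ (u : L), ∀ α ∈ N, ⁅u, α⁆ ∈ N) : finrank K N ≠ 2 := by
  intro hN2
  have : FiniteDimensional K L := b.finiteDimensional_of_finite
  have hcoann := Subspace.finrank_add_finrank_dualCoannihilator_eq N
  rw [hN2, finrank_eq_card_basis b, Fintype.card_fin] at hcoann
  obtain ⟨v, hv0, hv⟩ := finrank_eq_one_iff'.mp (by omega : finrank K N.dualCoannihilator = 1)
  refine hv0 (Subtype.ext (b.eq_zero_of_forall_lie_mem_span_singleton tb fun u => ?_))
  obtain ⟨c, hc⟩ := hv ⟨_, N.lie_mem_dualCoannihilator hN u v.2⟩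
  exact Submodule.mem_span_singleton.mpr ⟨c, congrArg Subtype.val hc⟩

theorem exists_isSl2Triple_mem_ker (tb : IsSl2Triple (b 2) (b 0) (b 1)) (φ : Dual K L)
    (hφ : ∀ u v, φ u = 0 → φ v = 0 → φ ⁅u, v⁆ = 0) :
    ∃ h e f : L, IsSl2Triple h e f ∧ φ h = 0 ∧ φ e = 0 := by
  rcases eq_or_ne (φ (b 1)) 0 with hq | hq
  · have hr : φ (b 2) = 0 := by
      have := hφ (b 1) (φ (b 2) • b 0 - φ (b 0) • b 2) hq (by simp only [map_sub, map_smul, smul_eq_mul]; ring)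
      simpa [hq, tb.lie_f_e, tb.lie_f_h] using this
    exact ⟨-b 2, b 1, b 0, tb.symm, by simp [hr], hq⟩
  · have hquad : φ (b 2) ^ 2 + 4 * φ (b 0) * φ (b 1) = 0 := by
      have := hφ (φ (b 1) • b 0 - φ (b 0) • b 1) (φ (b 2) • b 1 - φ (b 1) • b 2)
        (by simp only [map_sub, map_smul, smul_eq_mul]; ring) (by simp only [map_sub, map_smul, smul_eq_mul]; ring)
      simp only [lie_sub, lie_smul, sub_lie, smul_lie, lie_self, tb.lie_e_f, tb.lie_e_h,
        tb.lie_f_h, smul_zero, sub_zero, smul_neg, map_sub, map_smul, map_neg, smul_eq_mul,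
        LinearMap.map_smul_of_tower, nsmul_eq_mul, Nat.cast_ofNat] at this
      exact mul_left_cancel₀ hq (by linear_combination this)
    refine ⟨_, _, _, tb.shear (φ (b 2) / (2 * φ (b 1))), ?_, ?_⟩
    · simp [field]
    · simp only [map_sub, map_add, map_smul, smul_eq_mul]
      field_simp
      linear_combination hquad

theorem exists_lieEquiv_map_eq_span (tb : IsSl2Triple (b 2) (b 0) (b 1))
    (B : LieSubalgebra K L) (hB : finrank K B = 2) :
    ∃ F : L ≃ₗ⁅K⁆ L, B.toSubmodule.map (F : L →ₗ[K] L) = Submodule.span K {b 0, b 2} := by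
  have : FiniteDimensional K L := b.finiteDimensional_of_finite
  have hL : finrank K L = 3 := by rw [finrank_eq_card_basis b, Fintype.card_fin]
  obtain ⟨φ, hφ0, hBφ⟩ := B.toSubmodule.exists_le_ker_of_lt_top
    (Submodule.lt_top_of_finrank_lt_finrank (by rw [hL]; exact hB.trans_lt (by norm_num)))
  have hker : LinearMap.ker φ = B.toSubmodule := by
    refine (Submodule.eq_of_le_of_finrank_eq hBφ ?_).symm
    have := Module.Dual.finrank_ker_add_one_of_ne_zero hφ0
    change finrank K B = _
    omega
  obtain ⟨h, e, f, t, hh, he⟩ := b.exists_isSl2Triple_mem_ker tb φ fun u v hu hv => by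
    rw [← LinearMap.mem_ker, hker] at hu hv ⊢
    exact B.lie_mem hu hv
  obtain ⟨G, hG0, -, hG2⟩ := b.exists_lieEquiv_of_isSl2Triple tb t
  have hspan : finrank K (Submodule.span K {b 0, b 2}) = 2 := by
    have hli : LinearIndependent K ![b 0, b 2] := by
      convert b.linearIndependent.comp ![0, 2] (by decide) using 1
      ext i; fin_cases i <;> rfl
    have := finrank_span_eq_card hli
    rwa [Matrix.range_cons_cons_empty, Fintype.card_fin] at this
  refine ⟨G.symm, (Submodule.eq_of_le_of_finrank_eq ?_ ?_).symm⟩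
  · rw [Submodule.span_le]
    rintro - (rfl | rfl) <;> refine ⟨_, ?_, G.symm_apply_apply _⟩ <;> rw [← hker]
    exacts [hG0 ▸ he, hG2 ▸ hh]
  · rw [hspan, LinearEquiv.finrank_map_eq]
    exact hB.symm

end Module.Basis

section TStar

variable {L : Type*} [LieRing L] [LieAlgebra ℝ L]

lemma tstar_lie (x y : L × Dual ℝ L) : ⁅x, y⁆ = (⁅x.1, y.1⁆, ⁅x.1, y.2⁆ - ⁅y.1, x.2⁆) := rfl

def tstarFst : (L × Dual ℝ L) →ₗ⁅ℝ⁆ L :=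
  { LinearMap.fst ℝ L (Dual ℝ L) with map_lie' := rfl }

lemma LieSubalgebra.lie_fst_mem_comap_inr (H : LieSubalgebra ℝ (L × Dual ℝ L))
    {x : L × Dual ℝ L} (hx : x ∈ H) {α : Dual ℝ L}
    (hα : α ∈ H.toSubmodule.comap (LinearMap.inr ℝ L (Dual ℝ L))) :
    ⁅x.1, α⁆ ∈ H.toSubmodule.comap (LinearMap.inr ℝ L (Dual ℝ L)) := by
  simpa [tstar_lie] using H.lie_mem hx hα

theorem map_tstarAut_prod_top (F : L ≃ₗ⁅ℝ⁆ L) (B : Submodule ℝ L) :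
    (B.prod ⊤).map (tstarAut F) = (B.map (F : L →ₗ[ℝ] L)).prod ⊤ := by
  ext ⟨u, α⟩
  simp only [tstarAut, Submodule.mem_map, Submodule.mem_prod, Submodule.mem_top, and_true,
    LinearMap.prodMap_apply, Prod.mk.injEq, Prod.exists]
  constructor
  · rintro ⟨a, -, ha, rfl, -⟩
    exact Submodule.mem_map_of_mem ha
  · rintro ⟨a, ha, rfl⟩
    obtain ⟨β, hβ⟩ := F.symm.toLinearEquiv.dualMap.surjective α
    exact ⟨a, β, ha, rfl, hβ⟩

theorem Module.Basis.comap_inr_eq_top_of_five_le_finrank (b : Basis (Fin 3) ℝ L)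
    (tb : IsSl2Triple (b 2) (b 0) (b 1)) (H : LieSubalgebra ℝ (L × Dual ℝ L))
    (hH : 5 ≤ finrank ℝ H) : H.toSubmodule.comap (LinearMap.inr ℝ L (Dual ℝ L)) = ⊤ := by
  have : FiniteDimensional ℝ L := b.finiteDimensional_of_finite
  have hL : finrank ℝ L = 3 := by rw [finrank_eq_card_basis b, Fintype.card_fin]
  have hL' : finrank ℝ (Dual ℝ L) = 3 := by rw [Subspace.dual_finrank_eq, hL]
  have hsum : _ = finrank ℝ H := H.toSubmodule.finrank_map_fst_add_finrank_comap_inr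
  by_contra hN
  have hN_lt := Submodule.finrank_lt hN
  have hfst_le := Submodule.finrank_le (H.toSubmodule.map (LinearMap.fst ℝ L (Dual ℝ L)))
  have hfst : H.toSubmodule.map (LinearMap.fst ℝ L (Dual ℝ L)) = ⊤ :=
    Submodule.eq_top_of_finrank_eq (by omega)
  refine b.finrank_ne_two_of_forall_lie_mem tb
    (N := H.toSubmodule.comap (LinearMap.inr ℝ L (Dual ℝ L))) (fun u α hα => ?_) (by omega)
  obtain ⟨x, hx, rfl⟩ : u ∈ H.toSubmodule.map (LinearMap.fst ℝ L (Dual ℝ L)) := hfst ▸ trivial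
  exact H.lie_fst_mem_comap_inr hx hα

end TStar

theorem tstar_sl2_five_dim_degenerate_subalgebra_general
    {L : Type*} [LieRing L] [LieAlgebra ℝ L]
    (b : Module.Basis (Fin 3) ℝ L)
    (h12 : ⁅b 0, b 1⁆ = b 2)
    (h31 : ⁅b 2, b 0⁆ = (2 : ℝ) • b 0)
    (h32 : ⁅b 2, b 1⁆ = (-2 : ℝ) • b 1)
    (H : LieSubalgebra ℝ (L × Module.Dual ℝ L))
    (hdim : Module.finrank ℝ H = 5) :
    ∃ F : L ≃ₗ⁅ℝ⁆ L,
      Submodule.map (tstarAut F) H.toSubmodule =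
        (Submodule.span ℝ {b 0, b 2}).prod (⊤ : Submodule ℝ (Module.Dual ℝ L)) := by
  have tb : IsSl2Triple (b 2) (b 0) (b 1) :=
    ⟨b.ne_zero 2, h12, by rw [h31, ofNat_smul_eq_nsmul],
      by rw [h32, neg_smul, ofNat_smul_eq_nsmul]⟩
  have : FiniteDimensional ℝ L := b.finiteDimensional_of_finite
  have hN := b.comap_inr_eq_top_of_five_le_finrank tb H hdim.ge
  have hB : finrank ℝ (H.map tstarFst) = 2 := by
    have hsum : _ = finrank ℝ H := H.toSubmodule.finrank_map_fst_add_finrank_comap_inr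
    rw [hN, finrank_top, Subspace.dual_finrank_eq, finrank_eq_card_basis b, Fintype.card_fin,
      hdim] at hsum
    change finrank ℝ (H.toSubmodule.map (LinearMap.fst ℝ L (Dual ℝ L))) = 2
    omega
  obtain ⟨F, hF⟩ := b.exists_lieEquiv_map_eq_span tb (H.map tstarFst) hB
  refine ⟨F, ?_⟩
  rw [Submodule.eq_prod_top_of_comap_inr_eq_top _ hN, map_tstarAut_prod_top, ← hF]
  rfl

/-- Every 5-dimensional Lie subalgebra of `T*sl(2,ℝ)` that is degenerate with respect to
the canonical bilinear form can be mapped, by `T*F` for some automorphism `F` of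
`sl(2,ℝ)`, onto `span(e₁,e₃) ⊕ sl(2,ℝ)*`.  Here `sl(2,ℝ)` has basis `e₁, e₂, e₃` with
`[e₁,e₂] = e₃`, `[e₃,e₁] = 2e₁`, `[e₃,e₂] = −2e₂`. -/
theorem tstar_sl2_five_dim_degenerate_subalgebra
    {L : Type*} [LieRing L] [LieAlgebra ℝ L]
    (b : Module.Basis (Fin 3) ℝ L)
    (h12 : ⁅b 0, b 1⁆ = b 2)
    (h31 : ⁅b 2, b 0⁆ = (2 : ℝ) • b 0)
    (h32 : ⁅b 2, b 1⁆ = (-2 : ℝ) • b 1)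
    (H : LieSubalgebra ℝ (L × Module.Dual ℝ L))
    (hdim : Module.finrank ℝ H = 5)
    (hdeg : ∃ x ∈ H, x ≠ 0 ∧ ∀ y ∈ H, tstarForm x y = 0) :
    ∃ F : L ≃ₗ⁅ℝ⁆ L,
      Submodule.map (tstarAut F) H.toSubmodule =
        (Submodule.span ℝ {b 0, b 2}).prod (⊤ : Submodule ℝ (Module.Dual ℝ L)) :=
  tstar_sl2_five_dim_degenerate_subalgebra_general b h12 h31 h32 H hdim
end

section
/- Let n_1(2,2) be the 6-dimensional 2-step nilpotent real Lie algebra with basis (e_1,…,e_6) and nonvanishing brackets [e_6,e_3]=e_2, [e_6,e_5]=e_4, [e_3,e_5]=e_1. Then: (1) with h = span(e_1, e_2, e_4, e_3+e_6), θ_1 = e_1*∧e_3* − e_1*∧e_5* − e_1*∧e_6* + e_3*∧e_4* + e_3*∧e_6* + e_4*∧e_6* and θ_2 = e_1*∧e_3* − e_1*∧e_5* − e_1*∧e_6* + 2e_2*∧e_5* − e_3*∧e_4* + e_3*∧e_6* − e_4*∧e_6*, the triple (h, θ_1, θ_2) is a 2-symplectic structure on n_1(2,2); and (2) with θ = e_1*∧e_3*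 − e_1*∧e_6* + e_2*∧e_5* + e_2*∧e_6* + e_4*∧e_5*, the pair (Z(n_1(2,2)) = span(e_1,e_2,e_4), θ) is a 1-symplectic structure on n_1(2,2), i.e. θ is a nondegenerate 2-cocycle and the center is a 3-dimensional Lie subalgebra isotropic for θ. -/
/-- The alternating bilinear form `eᵢ* ∧ eⱼ*` associated to a basis `b`:
`(u, v) ↦ eᵢ*(u) eⱼ*(v) − eⱼ*(u) eᵢ*(v)`. -/
noncomputable def wedge {L : Type*} [AddCommGroup L] [Module ℝ L]
    (b : Module.Basis (Fin 6) ℝ L) (i j : Fin 6) (u v : L) : ℝ :=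
  b.repr u i * b.repr v j - b.repr u j * b.repr v i

/-- `θ₁ = e₁*∧e₃* − e₁*∧e₅* − e₁*∧e₆* + e₃*∧e₄* + e₃*∧e₆* + e₄*∧e₆*` (0-indexed). -/
noncomputable def nTheta1 {L : Type*} [AddCommGroup L] [Module ℝ L]
    (b : Module.Basis (Fin 6) ℝ L) (u v : L) : ℝ :=
  wedge b 0 2 u v - wedge b 0 4 u v - wedge b 0 5 u v + wedge b 2 3 u v
    + wedge b 2 5 u v + wedge b 3 5 u v

/-- `θ₂ = e₁*∧e₃* − e₁*∧e₅* − e₁*∧e₆* + 2e₂*∧e₅* − e₃*∧e₄* + e₃*∧e₆* − e₄*∧e₆*`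
(0-indexed). -/
noncomputable def nTheta2 {L : Type*} [AddCommGroup L] [Module ℝ L]
    (b : Module.Basis (Fin 6) ℝ L) (u v : L) : ℝ :=
  wedge b 0 2 u v - wedge b 0 4 u v - wedge b 0 5 u v + 2 * wedge b 1 4 u v
    - wedge b 2 3 u v + wedge b 2 5 u v - wedge b 3 5 u v

/-- `θ = e₁*∧e₃* − e₁*∧e₆* + e₂*∧e₅* + e₂*∧e₆* + e₄*∧e₅*` (0-indexed). -/
noncomputable def nTheta {L : Type*} [AddCommGroup L] [Module ℝ L]
    (b : Module.Basis (Fin 6) ℝ L) (u v : L) : ℝ :=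
  wedge b 0 2 u v - wedge b 0 5 u v + wedge b 1 4 u v + wedge b 1 5 u v
    + wedge b 3 4 u v

/-!
`n₁(2,2)` is 2-step nilpotent: every bracket lies in the centre `span(e₁, e₂, e₄)`, and its
coordinates are the three 2×2 minors of the `(e₃, e₅, e₆)`-coordinates of the arguments.
So the cocycle conditions become polynomial identities between these minors, isotropy is
read off from the linear equations cutting out `h` and the centre, and nondegeneracy from
the linear system obtained by pairing with the basis vectors.
-/

open Module

theorem Module.Basis.lie_eq_sum {ι R L : Type*} [Fintype ι] [CommRing R] [LieRing L]
    [LieAlgebra R L] (b : Basis ι R L) (u v : L) :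
    ⁅u, v⁆ = ∑ i, ∑ j, (b.repr u i * b.repr v j) • ⁅b i, b j⁆ := by
  conv_lhs => rw [← b.sum_repr u, ← b.sum_repr v]
  simp only [sum_lie, lie_sum, smul_lie, lie_smul, Finset.smul_sum, smul_smul]
  rw [Finset.sum_comm]
  simp only [mul_comm]

theorem Module.Basis.linearIndependent_of_repr_apply {ι κ R M : Type*} [CommRing R]
    [AddCommGroup M] [Module R M] [DecidableEq κ] (b : Basis ι R M) (v : κ → M) (p : κ → ι)
    (hv : ∀ i j, b.repr (v j) (p i) = if i = j then 1 else 0) : LinearIndependent R v := by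
  let f : M →ₗ[R] κ → R := LinearMap.funLeft R R p ∘ₗ Finsupp.lcoeFun ∘ₗ b.repr.toLinearMap
  refine LinearIndependent.of_comp f ?_
  convert Pi.linearIndependent_single_one κ R with j
  ext i
  simp [f, hv, Pi.single_apply]

def IsTwoCocycle {L : Type*} [LieRing L] (θ : L → L → ℝ) : Prop :=
  ∀ u v w : L, θ ⁅u, v⁆ w + θ ⁅v, w⁆ u + θ ⁅w, u⁆ v = 0

section Forms

variable {L : Type*} [AddCommGroup L] [Module ℝ L] (b : Basis (Fin 6) ℝ L)

theorem wedge_self (i j : Fin 6) (u : L) : wedge b i j u u = 0 := by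
  rw [wedge, mul_comm, sub_self]

theorem nTheta1_self (u : L) : nTheta1 b u u = 0 := by simp [nTheta1, wedge_self]

theorem nTheta2_self (u : L) : nTheta2 b u u = 0 := by simp [nTheta2, wedge_self]

theorem nTheta_self (u : L) : nTheta b u u = 0 := by simp [nTheta, wedge_self]

theorem eq_zero_of_nTheta1_of_nTheta2 {u : L} (h₁ : ∀ v, nTheta1 b u v = 0)
    (h₂ : ∀ v, nTheta2 b u v = 0) : u = 0 := by
  have e0 := h₁ (b 0)
  have e2 := h₁ (b 2)
  have e3 := h₁ (b 3)
  have e4 := h₁ (b 4)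
  have e5 := h₁ (b 5)
  have f1 := h₂ (b 1)
  have f3 := h₂ (b 3)
  have f4 := h₂ (b 4)
  have f5 := h₂ (b 5)
  simp [nTheta1, nTheta2, wedge] at e0 e2 e3 e4 e5 f1 f3 f4 f5
  refine b.forall_coord_eq_zero_iff.1 fun i => ?_
  fin_cases i <;> simp <;> linarith

theorem eq_zero_of_nTheta {u : L} (h : ∀ v, nTheta b u v = 0) : u = 0 := by
  have e0 := h (b 0)
  have e1 := h (b 1)
  have e2 := h (b 2)
  have e3 := h (b 3)
  have e4 := h (b 4)
  have e5 := h (b 5)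
  simp [nTheta, wedge] at e0 e1 e2 e3 e4 e5
  refine b.forall_coord_eq_zero_iff.1 fun i => ?_
  fin_cases i <;> simp <;> linarith

def hSpan : Submodule ℝ L := Submodule.span ℝ {b 0, b 1, b 3, b 2 + b 5}

variable {b}

theorem repr_of_mem_hSpan {u : L} (hu : u ∈ hSpan b) :
    b.repr u 4 = 0 ∧ b.repr u 2 = b.repr u 5 := by
  suffices hSpan b ≤ LinearMap.ker (b.coord 4) ⊓ LinearMap.ker (b.coord 2 - b.coord 5) by
    simpa [sub_eq_zero] using this hu
  rw [hSpan, Submodule.span_le]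
  rintro z (rfl | rfl | rfl | rfl) <;> simp

theorem nTheta1_eq_zero_of_mem_hSpan {u v : L} (hu : u ∈ hSpan b) (hv : v ∈ hSpan b) :
    nTheta1 b u v = 0 := by
  obtain ⟨u4, u25⟩ := repr_of_mem_hSpan hu
  obtain ⟨v4, v25⟩ := repr_of_mem_hSpan hv
  simp only [nTheta1, wedge, u4, v4, u25, v25]
  ring

theorem nTheta2_eq_zero_of_mem_hSpan {u v : L} (hu : u ∈ hSpan b) (hv : v ∈ hSpan b) :
    nTheta2 b u v = 0 := by
  obtain ⟨u4, u25⟩ := repr_of_mem_hSpan hu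
  obtain ⟨v4, v25⟩ := repr_of_mem_hSpan hv
  simp only [nTheta2, wedge, u4, v4, u25, v25]
  ring

theorem finrank_hSpan : finrank ℝ (hSpan b) = 4 := by
  have hli : LinearIndependent ℝ ![b 0, b 1, b 3, b 2 + b 5] :=
    b.linearIndependent_of_repr_apply _ ![0, 1, 3, 2] fun i j => by
      fin_cases i <;> fin_cases j <;> simp
  have hrange : Set.range ![b 0, b 1, b 3, b 2 + b 5] = {b 0, b 1, b 3, b 2 + b 5} := by
    simp only [Matrix.range_cons, Matrix.range_empty, Set.union_empty, Set.singleton_union]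
  rw [hSpan, ← hrange, finrank_span_eq_card hli, Fintype.card_fin]

end Forms

structure IsN122Basis {L : Type*} [LieRing L] [LieAlgebra ℝ L] (b : Basis (Fin 6) ℝ L) :
    Prop where
  lie_5_2 : ⁅b 5, b 2⁆ = b 1
  lie_5_4 : ⁅b 5, b 4⁆ = b 3
  lie_2_4 : ⁅b 2, b 4⁆ = b 0
  lie_0_1 : ⁅b 0, b 1⁆ = 0
  lie_0_2 : ⁅b 0, b 2⁆ = 0
  lie_0_3 : ⁅b 0, b 3⁆ = 0
  lie_0_4 : ⁅b 0, b 4⁆ = 0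
  lie_0_5 : ⁅b 0, b 5⁆ = 0
  lie_1_2 : ⁅b 1, b 2⁆ = 0
  lie_1_3 : ⁅b 1, b 3⁆ = 0
  lie_1_4 : ⁅b 1, b 4⁆ = 0
  lie_1_5 : ⁅b 1, b 5⁆ = 0
  lie_2_3 : ⁅b 2, b 3⁆ = 0
  lie_3_4 : ⁅b 3, b 4⁆ = 0
  lie_3_5 : ⁅b 3, b 5⁆ = 0

namespace IsN122Basis

variable {L : Type*} [LieRing L] [LieAlgebra ℝ L] {b : Basis (Fin 6) ℝ L}

theorem repr_lie (hb : IsN122Basis b) (u v : L) :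
    ⇑(b.repr ⁅u, v⁆) = ![b.repr u 2 * b.repr v 4 - b.repr u 4 * b.repr v 2,
      b.repr u 5 * b.repr v 2 - b.repr u 2 * b.repr v 5, 0,
      b.repr u 5 * b.repr v 4 - b.repr u 4 * b.repr v 5, 0, 0] := by
  rw [b.lie_eq_sum]
  simp only [Fin.sum_univ_six, lie_self, hb.lie_5_2, hb.lie_5_4, hb.lie_2_4, hb.lie_0_1,
    hb.lie_0_2, hb.lie_0_3, hb.lie_0_4, hb.lie_0_5, hb.lie_1_2, hb.lie_1_3, hb.lie_1_4,
    hb.lie_1_5, hb.lie_2_3, hb.lie_3_4, hb.lie_3_5,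
    ← lie_skew (b 1) (b 0), ← lie_skew (b 2) (b 0), ← lie_skew (b 3) (b 0),
    ← lie_skew (b 4) (b 0), ← lie_skew (b 5) (b 0), ← lie_skew (b 2) (b 1),
    ← lie_skew (b 3) (b 1), ← lie_skew (b 4) (b 1), ← lie_skew (b 5) (b 1),
    ← lie_skew (b 3) (b 2), ← lie_skew (b 4) (b 2), ← lie_skew (b 4) (b 3),
    ← lie_skew (b 2) (b 5), ← lie_skew (b 4) (b 5), ← lie_skew (b 5) (b 3)]
  ext i
  fin_cases i <;> simp <;> ring

theorem mem_center_iff (hb : IsN122Basis b) {z : L} :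
    z ∈ LieAlgebra.center ℝ L ↔ b.repr z 2 = 0 ∧ b.repr z 4 = 0 ∧ b.repr z 5 = 0 := by
  rw [LieModule.mem_maxTrivSubmodule]
  constructor
  · intro hz
    have h4 := hb.repr_lie (b 4) z
    have h2 := hb.repr_lie (b 2) z
    rw [hz, map_zero] at h4 h2
    have := congrFun h4 0
    have := congrFun h4 3
    have := congrFun h2 0
    simp_all
  · rintro ⟨z2, z4, z5⟩ x
    refine b.ext_elem fun i => ?_
    rw [hb.repr_lie, z2, z4, z5]
    fin_cases i <;> simp

theorem lie_mem_center (hb : IsN122Basis b) (u v : L) : ⁅u, v⁆ ∈ LieAlgebra.center ℝ L := by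
  simp [hb.mem_center_iff, hb.repr_lie]

theorem center_eq_span (hb : IsN122Basis b) :
    (LieAlgebra.center ℝ L).toSubmodule = Submodule.span ℝ {b 0, b 1, b 3} := by
  have himage : ({b 0, b 1, b 3} : Set L) = b '' {0, 1, 3} := by
    simp only [Set.image_insert_eq, Set.image_singleton]
  ext z
  rw [himage, b.mem_span_image, LieSubmodule.mem_toSubmodule, hb.mem_center_iff]
  constructor
  · rintro ⟨z2, z4, z5⟩ i hi
    rw [Finset.mem_coe, Finsupp.mem_support_iff] at hi
    fin_cases i <;> simp_all
  · intro hz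
    refine ⟨?_, ?_, ?_⟩ <;> by_contra hne <;>
      simpa using hz (Finsupp.mem_support_iff.2 hne)

theorem finrank_center (hb : IsN122Basis b) :
    finrank ℝ (LieAlgebra.center ℝ L).toSubmodule = 3 := by
  have hli : LinearIndependent ℝ ![b 0, b 1, b 3] :=
    b.linearIndependent_of_repr_apply _ ![0, 1, 3] fun i j => by
      fin_cases i <;> fin_cases j <;> simp
  have hrange : Set.range ![b 0, b 1, b 3] = {b 0, b 1, b 3} := by
    simp only [Matrix.range_cons, Matrix.range_empty, Set.union_empty, Set.singleton_union]
  rw [hb.center_eq_span, ← hrange, finrank_span_eq_card hli, Fintype.card_fin]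

theorem nTheta_eq_zero_of_mem_center (hb : IsN122Basis b) {u v : L}
    (hu : u ∈ LieAlgebra.center ℝ L) (hv : v ∈ LieAlgebra.center ℝ L) : nTheta b u v = 0 := by
  obtain ⟨u2, u4, u5⟩ := hb.mem_center_iff.1 hu
  obtain ⟨v2, v4, v5⟩ := hb.mem_center_iff.1 hv
  simp only [nTheta, wedge, u2, u4, u5, v2, v4, v5]
  ring

def hSubalgebra (hb : IsN122Basis b) : LieSubalgebra ℝ L where
  toSubmodule := hSpan b
  lie_mem' {u v} _ _ := by
    have h : ⁅u, v⁆ ∈ Submodule.span ℝ {b 0, b 1, b 3} := hb.center_eq_span ▸ hb.lie_mem_center u v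
    exact Submodule.span_mono (by simp [Set.subset_def]) h

theorem isTwoCocycle_nTheta1 (hb : IsN122Basis b) : IsTwoCocycle (nTheta1 b) := by
  intro u v w
  simp only [nTheta1, wedge, hb.repr_lie]
  simp
  ring

theorem isTwoCocycle_nTheta2 (hb : IsN122Basis b) : IsTwoCocycle (nTheta2 b) := by
  intro u v w
  simp only [nTheta2, wedge, hb.repr_lie]
  simp
  ring

theorem isTwoCocycle_nTheta (hb : IsN122Basis b) : IsTwoCocycle (nTheta b) := by
  intro u v w
  simp only [nTheta, wedge, hb.repr_lie]
  simp
  ring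

end IsN122Basis

/-- On the 2-step nilpotent Lie algebra `n₁(2,2)` (nonvanishing brackets
`[e₆,e₃]=e₂`, `[e₆,e₅]=e₄`, `[e₃,e₅]=e₁`):
(1) `(h = span(e₁,e₂,e₄,e₃+e₆), θ₁, θ₂)` is a 2-symplectic structure;
(2) `(Z(n₁(2,2)) = span(e₁,e₂,e₄), θ)` is a 1-symplectic structure, i.e. `θ` is a
nondegenerate 2-cocycle and the center is a 3-dimensional subalgebra isotropic for `θ`. -/
theorem n1_22_symplectic_structures
    {L : Type*} [LieRing L] [LieAlgebra ℝ L]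
    (b : Module.Basis (Fin 6) ℝ L)
    (h63 : ⁅b 5, b 2⁆ = b 1) (h65 : ⁅b 5, b 4⁆ = b 3) (h35 : ⁅b 2, b 4⁆ = b 0)
    (h12 : ⁅b 0, b 1⁆ = 0) (h13 : ⁅b 0, b 2⁆ = 0) (h14 : ⁅b 0, b 3⁆ = 0)
    (h15 : ⁅b 0, b 4⁆ = 0) (h16 : ⁅b 0, b 5⁆ = 0)
    (h23 : ⁅b 1, b 2⁆ = 0) (h24 : ⁅b 1, b 3⁆ = 0) (h25 : ⁅b 1, b 4⁆ = 0)
    (h26 : ⁅b 1, b 5⁆ = 0)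
    (h34 : ⁅b 2, b 3⁆ = 0) (h45 : ⁅b 3, b 4⁆ = 0) (h46 : ⁅b 3, b 5⁆ = 0) :
    -- (1) the 2-symplectic structure
    ((∃ H : LieSubalgebra ℝ L,
        H.toSubmodule = Submodule.span ℝ {b 0, b 1, b 3, b 2 + b 5} ∧
        Module.finrank ℝ H = 4) ∧
      (∀ u : L, nTheta1 b u u = 0 ∧ nTheta2 b u u = 0) ∧
      (∀ u v w : L,
        nTheta1 b ⁅u, v⁆ w + nTheta1 b ⁅v, w⁆ u + nTheta1 b ⁅w, u⁆ v = 0) ∧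
      (∀ u v w : L,
        nTheta2 b ⁅u, v⁆ w + nTheta2 b ⁅v, w⁆ u + nTheta2 b ⁅w, u⁆ v = 0) ∧
      (∀ u ∈ Submodule.span ℝ ({b 0, b 1, b 3, b 2 + b 5} : Set L),
        ∀ v ∈ Submodule.span ℝ ({b 0, b 1, b 3, b 2 + b 5} : Set L),
          nTheta1 b u v = 0 ∧ nTheta2 b u v = 0) ∧
      (∀ u : L, (∀ v : L, nTheta1 b u v = 0) → (∀ v : L, nTheta2 b u v = 0) →
        u = 0)) ∧
    -- (2) the 1-symplectic structure on the center
    ((LieAlgebra.center ℝ L).toSubmodule =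
        Submodule.span ℝ ({b 0, b 1, b 3} : Set L) ∧
      Module.finrank ℝ (LieAlgebra.center ℝ L).toSubmodule = 3 ∧
      (∀ u : L, nTheta b u u = 0) ∧
      (∀ u v w : L,
        nTheta b ⁅u, v⁆ w + nTheta b ⁅v, w⁆ u + nTheta b ⁅w, u⁆ v = 0) ∧
      (∀ u : L, (∀ v : L, nTheta b u v = 0) → u = 0) ∧
      (∀ u ∈ LieAlgebra.center ℝ L, ∀ v ∈ LieAlgebra.center ℝ L,
        nTheta b u v = 0)) := by
  have hb : IsN122Basis b :=
    ⟨h63, h65, h35, h12, h13, h14, h15, h16, h23, h24, h25, h26, h34, h45, h46⟩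
  refine ⟨⟨⟨hb.hSubalgebra, rfl, finrank_hSpan⟩, fun u => ⟨nTheta1_self b u, nTheta2_self b u⟩,
    hb.isTwoCocycle_nTheta1, hb.isTwoCocycle_nTheta2,
    fun u hu v hv => ⟨nTheta1_eq_zero_of_mem_hSpan hu hv, nTheta2_eq_zero_of_mem_hSpan hu hv⟩,
    fun u => eq_zero_of_nTheta1_of_nTheta2 b⟩,
    hb.center_eq_span, hb.finrank_center, nTheta_self b, hb.isTwoCocycle_nTheta,
    fun u => eq_zero_of_nTheta b, fun u hu v hv => hb.nTheta_eq_zero_of_mem_center hu hv⟩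
end
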